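/- arXiv:math/0609573 — 3 statements merged into one kernel-verified Lean document; each statement's English description precedes it below -/
import Mathlib

section
/- If an orientation-preserving circle homeomorphism g has a periodic point of least period q, then its rotation number is p/q mod ℤ for some integer p coprime to q. -/
open Filter Set

/-- A lift of an orientation-preserving circle homeomorphism. -/
def IsCircleLift (g : ℝ → ℝ) : Prop :=
  Continuous g ∧ StrictMono g ∧ Function.Bijective g ∧ ∀ x : ℝ, g (x + 1) = g x + 1

/-- `g` has translation (rotation) number `r`: `g^[n] 0 / n → r`. -/
def HasTransNum (g : ℝ → ℝ) (r : ℝ) : Prop :=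
  Tendsto (fun n : ℕ => g^[n] 0 / n) atTop (nhds r)

/-- If a monotone map commuting with integer translations satisfies
`F^[d] x = x + d * m'` with `d ≥ 1`, then `F x = x + m'`. -/
lemma fixed_of_iter_fixed (F : ℝ → ℝ) (hmono : Monotone F)
    (hint : ∀ (y : ℝ) (k : ℤ), F (y + k) = F y + k)
    (x : ℝ) (m' : ℤ) (d : ℕ) (hd : 0 < d) (hfix : F^[d] x = x + d * m') :
    F x = x + m' := by
  set G : ℝ → ℝ := fun y => F y - m' with hG
  have hGmono : Monotone G := fun a b hab => by
    simpa [hG] using hmono hab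
  have hGiter : ∀ j : ℕ, G^[j] x = F^[j] x - j * m' := by
    intro j
    induction j with
    | zero => simp
    | succ n ih =>
      rw [Function.iterate_succ_apply', Function.iterate_succ_apply', ih, hG]
      have : F^[n] x - (n : ℝ) * m' = F^[n] x + ((-(n * m') : ℤ) : ℝ) := by
        push_cast; ring
      rw [this]
      show F (F^[n] x + ((-(n * m') : ℤ) : ℝ)) - (m' : ℝ) = F (F^[n] x) - ((n+1 : ℕ) : ℝ) * m'
      rw [hint]
      push_cast; ring
  have hGd : G^[d] x = x := by
    rw [hGiter d, hfix]; ring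
  have key : G x = x := by
    rcases lt_trichotomy (G x) x with h | h | h
    · exfalso
      have mono : ∀ j : ℕ, 0 < j → G^[j] x ≤ G x := by
        intro j hj
        induction j with
        | zero => omega
        | succ n ih =>
          rcases Nat.eq_zero_or_pos n with h0 | h0
          · subst h0; simp
          · have := ih h0
            calc G^[n+1] x = G (G^[n] x) := Function.iterate_succ_apply' G n x
              _ ≤ G (G x) := hGmono this
              _ ≤ G x := hGmono h.le
      have := mono d hd
      rw [hGd] at this
      exact absurd (this.trans_lt h) (lt_irrefl x)
    · exact h
    · exfalso
      have mono : ∀ j : ℕ, 0 < j → G x ≤ G^[j] x := by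
        intro j hj
        induction j with
        | zero => omega
        | succ n ih =>
          rcases Nat.eq_zero_or_pos n with h0 | h0
          · subst h0; simp
          · have := ih h0
            calc G x ≤ G (G x) := hGmono h.le
              _ ≤ G (G^[n] x) := hGmono this
              _ = G^[n+1] x := (Function.iterate_succ_apply' G n x).symm
      have := mono d hd
      rw [hGd] at this
      exact absurd (h.trans_le this) (lt_irrefl x)
  have : F x - m' = x := key
  linarith

/-- if `g` has a periodic point of least period `q`, then its rotation
number is `p/q` mod ℤ for some `p` coprime to `q`. -/
theorem rotation_number_of_least_period
    (g : AddCircle (1 : ℝ) → AddCircle (1 : ℝ))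
    (hg : Function.Bijective g) (hgc : Continuous g)
    (g' : ℝ → ℝ) (hlift : IsCircleLift g')
    (hproj : ∀ x : ℝ, ((g' x : ℝ) : AddCircle (1 : ℝ)) = g (x : AddCircle (1 : ℝ)))
    (x : AddCircle (1 : ℝ)) (q : ℕ) (hq : 0 < q)
    (hfix : g^[q] x = x) (hleast : ∀ j : ℕ, 0 < j → j < q → g^[j] x ≠ x)
    (r : ℝ) (hr : HasTransNum g' r) :
    ∃ p : ℤ, Int.gcd p (q : ℤ) = 1 ∧ ∃ k : ℤ, r = (p : ℝ) / (q : ℝ) + (k : ℝ) := by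
  obtain ⟨hcont, hsm, hbij, hadd⟩ := hlift
  -- g' commutes with integer translations
  have hint : ∀ (y : ℝ) (k : ℤ), g' (y + k) = g' y + k := by
    intro y k
    induction k using Int.induction_on with
    | zero => simp
    | succ n ih =>
      have : y + ((n : ℤ) + 1 : ℤ) = (y + (n : ℤ)) + 1 := by push_cast; ring
      rw [this, hadd, ih]; push_cast; ring
    | pred n ih =>
      have h1 : y + (-(n : ℤ) - 1 : ℤ) + 1 = y + (-(n : ℤ) : ℤ) := by push_cast; ring
      have := hadd (y + (-(n : ℤ) - 1 : ℤ))
      rw [h1, ih] at this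
      push_cast at this ⊢
      linarith
  have hint_iter : ∀ (n : ℕ) (y : ℝ) (k : ℤ), g'^[n] (y + k) = g'^[n] y + k := by
    intro n
    induction n with
    | zero => simp
    | succ n ih =>
      intro y k
      rw [Function.iterate_succ_apply', Function.iterate_succ_apply', ih, hint]
  -- lift x
  obtain ⟨x₀, hx₀⟩ : ∃ y : ℝ, (y : AddCircle (1 : ℝ)) = x := Quotient.exists_rep x
  -- projection of iterates
  have hproj_iter : ∀ n : ℕ, ((g'^[n] x₀ : ℝ) : AddCircle (1 : ℝ)) = g^[n] x := by
    intro n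
    induction n with
    | zero => simpa using hx₀
    | succ n ih =>
      rw [Function.iterate_succ_apply', Function.iterate_succ_apply', hproj, ih]
  -- equality on the circle gives an integer
  have coe_eq : ∀ a b : ℝ, (a : AddCircle (1 : ℝ)) = b → ∃ k : ℤ, b = a + k := by
    intro a b hab
    rw [QuotientAddGroup.eq_iff_sub_mem] at hab
    obtain ⟨k, hk⟩ := hab
    refine ⟨-k, ?_⟩
    simp only [zsmul_eq_mul, mul_one] at hk
    push_cast
    linarith
  have coe_int : ∀ (a : ℝ) (k : ℤ), ((a + k : ℝ) : AddCircle (1 : ℝ)) = (a : AddCircle (1 : ℝ)) := by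
    intro a k
    rw [QuotientAddGroup.eq_iff_sub_mem]
    exact ⟨k, by simp⟩
  -- the integer m with g'^[q] x₀ = x₀ + m
  obtain ⟨m, hm⟩ : ∃ m : ℤ, g'^[q] x₀ = x₀ + m := by
    apply coe_eq
    rw [hx₀, ← hfix, ← hproj_iter]
  -- coprimality via least period
  set d : ℕ := Int.gcd m (q : ℤ) with hd
  have hd_pos : 0 < d := Int.gcd_pos_of_ne_zero_right m (by exact_mod_cast hq.ne')
  have hdvd_q : d ∣ q := by
    have := Int.gcd_dvd_right (a := m) (b := (q : ℤ))
    exact_mod_cast Int.ofNat_dvd.mp (by exact_mod_cast this)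
  have hdvd_m : (d : ℤ) ∣ m := Int.gcd_dvd_left m (q : ℤ)
  obtain ⟨q', hq'⟩ := hdvd_q
  obtain ⟨m', hm'⟩ := hdvd_m
  have hq'_pos : 0 < q' := by
    rcases Nat.eq_zero_or_pos q' with h0 | h0
    · subst h0; simp at hq'; omega
    · exact h0
  -- F = g'^[q'], F^[d] x₀ = x₀ + d * m'
  have hFiter : (g'^[q'])^[d] x₀ = x₀ + (d : ℝ) * (m' : ℝ) := by
    rw [← Function.iterate_mul]
    have : q' * d = q := by rw [hq']; ring
    rw [this, hm, hm', hd]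
    push_cast; ring
  have hFmono : Monotone (g'^[q']) := (hsm.iterate q').monotone
  have hFint : ∀ (y : ℝ) (k : ℤ), g'^[q'] (y + k) = g'^[q'] y + k := hint_iter q'
  have hFfix : g'^[q'] x₀ = x₀ + m' :=
    fixed_of_iter_fixed _ hFmono hFint x₀ m' d hd_pos hFiter
  -- hence g^[q'] x = x, so q' = q, d = 1
  have hper : g^[q'] x = x := by
    rw [← hproj_iter, hFfix, coe_int, hx₀]
  have hd1 : d = 1 := by
    by_contra hne
    have : q' < q := by
      have h2 : 2 ≤ d := by omega
      calc q' < q' * d := by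
            nlinarith
        _ = q := (mul_comm q' d).trans hq'.symm
    exact hleast q' hq'_pos this hper
  -- build the CircleDeg1Lift
  set f : CircleDeg1Lift := ⟨⟨g', hsm.monotone⟩, hadd⟩ with hf
  have hfe : ∀ y, f y = g' y := fun y => rfl
  have hfq : (f ^ q) x₀ = x₀ + m := by
    rw [CircleDeg1Lift.coe_pow]
    show g'^[q] x₀ = x₀ + m
    exact hm
  have hτq : CircleDeg1Lift.translationNumber (f ^ q) = m :=
    CircleDeg1Lift.translationNumber_of_eq_add_int _ hfq
  have hτ : CircleDeg1Lift.translationNumber f = (m : ℝ) / (q : ℝ) := by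
    have := CircleDeg1Lift.translationNumber_pow f q
    rw [hτq] at this
    field_simp
    linarith [this]
  -- r equals the translation number
  have hr' : r = CircleDeg1Lift.translationNumber f := by
    have h1 := CircleDeg1Lift.tendsto_translation_number₀ f
    have h2 : Tendsto (fun n : ℕ => (f ^ n) 0 / n) atTop (nhds r) := by
      refine hr.congr fun n => ?_
      rw [CircleDeg1Lift.coe_pow]
      rfl
    exact tendsto_nhds_unique h2 h1
  refine ⟨m, hd1, 0, ?_⟩
  rw [hr', hτ]
  simp
end

section
/- Let t be an orientation-preserving piecewise linear homeomorphism of the circle ℝ/ℤ that maps rationals to rationals, has finitely many break points all of which are rational, and whose derivative on each linear piece is an integer power of a fixed integer n ≥ 2. Then the rotation number of t is rational. -/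
open Filter Set

/-- `t` (a lift of a circle map) is piecewise linear with rational break points
`b 0 = 0 < b 1 < ⋯ < b K = 1`, with slope `n ^ z i` on the `i`-th piece. -/
def IsPLWithData (t : ℝ → ℝ) (n : ℕ) (K : ℕ) (b : Fin (K + 1) → ℚ)
    (z : Fin K → ℤ) : Prop :=
  b 0 = 0 ∧ b (Fin.last K) = 1 ∧ StrictMono b ∧
    ∀ i : Fin K, ∀ x ∈ Icc ((b i.castSucc : ℝ)) ((b i.succ : ℝ)),
      t x = t (b i.castSucc) + (n : ℝ) ^ (z i) * (x - (b i.castSucc : ℝ))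

namespace RRN

def II (u : ℝ) : Prop := ∃ c : ℤ, u = (c : ℝ)

lemma II.add {u v : ℝ} (hu : II u) (hv : II v) : II (u + v) := by
  obtain ⟨c, rfl⟩ := hu; obtain ⟨c', rfl⟩ := hv; exact ⟨c + c', by push_cast; ring⟩

lemma II.sub {u v : ℝ} (hu : II u) (hv : II v) : II (u - v) := by
  obtain ⟨c, rfl⟩ := hu; obtain ⟨c', rfl⟩ := hv; exact ⟨c - c', by push_cast; ring⟩

lemma II.mul {u v : ℝ} (hu : II u) (hv : II v) : II (u * v) := by
  obtain ⟨c, rfl⟩ := hu; obtain ⟨c', rfl⟩ := hv; exact ⟨c * c', by push_cast; ring⟩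

lemma II.int (c : ℤ) : II (c : ℝ) := ⟨c, rfl⟩

lemma II.nat (c : ℕ) : II (c : ℝ) := ⟨c, by push_cast; ring⟩

lemma II.zpow_nonneg (n : ℕ) {k : ℤ} (hk : 0 ≤ k) : II ((n : ℝ) ^ k) := by
  refine ⟨(n : ℤ) ^ k.toNat, ?_⟩
  rw [← Int.toNat_of_nonneg hk, zpow_natCast]
  push_cast
  rw [Int.toNat_of_nonneg hk]

lemma rat_mul_den_int (r : ℚ) (Q : ℕ) (h : r.den ∣ Q) : II ((r : ℝ) * Q) := by
  obtain ⟨k, hk⟩ := h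
  refine ⟨r.num * k, ?_⟩
  have hden : ((r.den : ℝ)) ≠ 0 := by positivity
  rw [Rat.cast_def, hk]
  push_cast
  field_simp

/-! ### piece index -/

noncomputable def pieceAux {K : ℕ} (b : Fin (K + 1) → ℚ) (hK : 0 < K) (s : ℝ) : Fin K :=
  (insert (⟨0, hK⟩ : Fin K)
    (Finset.univ.filter fun i : Fin K => ((b i.castSucc : ℚ) : ℝ) ≤ s)).max'
    (Finset.insert_nonempty _ _)

lemma pieceAux_le {K : ℕ} (b : Fin (K + 1) → ℚ) (hK : 0 < K) (hb0 : b 0 = 0)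
    {s : ℝ} (hs : 0 ≤ s) : ((b (pieceAux b hK s).castSucc : ℚ) : ℝ) ≤ s := by
  have hmem := Finset.max'_mem (insert (⟨0, hK⟩ : Fin K)
    (Finset.univ.filter fun i : Fin K => ((b i.castSucc : ℚ) : ℝ) ≤ s))
    (Finset.insert_nonempty _ _)
  rcases Finset.mem_insert.1 hmem with h | h
  · rw [show pieceAux b hK s = ⟨0, hK⟩ from h]
    have : (⟨0, hK⟩ : Fin K).castSucc = (0 : Fin (K + 1)) := by
      apply Fin.ext; simp
    rw [this, hb0]
    simpa using hs
  · exact (Finset.mem_filter.1 h).2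

lemma pieceAux_lt {K : ℕ} (b : Fin (K + 1) → ℚ) (hK : 0 < K)
    (hbK : b (Fin.last K) = 1) {s : ℝ} (hs : s < 1) :
    s < ((b (pieceAux b hK s).succ : ℚ) : ℝ) := by
  by_contra h
  push_neg at h
  set c := pieceAux b hK s with hc
  rcases eq_or_lt_of_le (Nat.succ_le_of_lt c.isLt) with hcase | hcase
  · -- c.val + 1 = K : c.succ = last
    have : c.succ = Fin.last K := by apply Fin.ext; simpa using hcase
    rw [this, hbK] at h
    simp at h
    linarith
  · -- c.val + 1 < K
    set i' : Fin K := ⟨c.val + 1, hcase⟩ with hi'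
    have hic : i'.castSucc = c.succ := by apply Fin.ext; simp [hi']
    have hmem : i' ∈ insert (⟨0, hK⟩ : Fin K)
        (Finset.univ.filter fun i : Fin K => ((b i.castSucc : ℚ) : ℝ) ≤ s) := by
      refine Finset.mem_insert_of_mem (Finset.mem_filter.2 ⟨Finset.mem_univ _, ?_⟩)
      rw [hic]
      exact h
    have hle : i' ≤ c := Finset.le_max' _ i' hmem
    have : i'.val ≤ c.val := hle
    simp [hi'] at this

/-! ### the level structure -/

def Jz (n Qd : ℕ) (k : ℤ) (y : ℝ) : Prop := II (y * (Qd * (n : ℝ) ^ k))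

noncomputable def dd (n Qd : ℕ) (y : ℝ) : ℕ := sInf {m : ℕ | Jz n Qd (m : ℤ) y}

def InA (n Qd : ℕ) (y : ℝ) : Prop := ∃ m : ℕ, Jz n Qd (m : ℤ) y

variable {n Qd : ℕ}

lemma nn_ne (hn : 2 ≤ n) : ((n : ℝ)) ≠ 0 := by
  have : 0 < n := by omega
  positivity

lemma zpow_split (hn : 2 ≤ n) {k k' : ℤ} (h : k ≤ k') :
    ((n : ℝ)) ^ k' = (n : ℝ) ^ k * (n : ℝ) ^ (k' - k) := by
  rw [← zpow_add₀ (nn_ne hn)]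
  congr 1
  ring

lemma Jz_mono (hn : 2 ≤ n) {k k' : ℤ} (h : k ≤ k') {y : ℝ} (hJ : Jz n Qd k y) :
    Jz n Qd k' y := by
  have he : y * (Qd * (n:ℝ) ^ k') = (y * (Qd * (n:ℝ) ^ k)) * (n:ℝ) ^ (k' - k) := by
    rw [zpow_split hn h]; ring
  unfold Jz at *
  rw [he]
  exact hJ.mul (II.zpow_nonneg n (by omega))

lemma Jz_shift (hn : 2 ≤ n) (c : ℤ) {k : ℤ} (hk : 0 ≤ k) {y : ℝ} :
    Jz n Qd k (y + c) ↔ Jz n Qd k y := by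
  have hcI : II ((c : ℝ) * (Qd * (n:ℝ) ^ k)) :=
    (II.int c).mul ((II.nat Qd).mul (II.zpow_nonneg n hk))
  unfold Jz
  constructor
  · intro h
    have : y * (Qd * (n:ℝ) ^ k) = (y + c) * (Qd * (n:ℝ) ^ k) - (c:ℝ) * (Qd * (n:ℝ)^k) := by ring
    rw [this]; exact h.sub hcI
  · intro h
    have : (y + c) * (Qd * (n:ℝ) ^ k) = y * (Qd * (n:ℝ) ^ k) + (c:ℝ) * (Qd * (n:ℝ)^k) := by ring
    rw [this]; exact h.add hcI

lemma InA_shift (hn : 2 ≤ n) (c : ℤ) {y : ℝ} : InA n Qd (y + c) ↔ InA n Qd y := by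
  unfold InA
  exact exists_congr fun m => Jz_shift hn c (by positivity)

lemma dd_shift (hn : 2 ≤ n) (c : ℤ) (y : ℝ) : dd n Qd (y + c) = dd n Qd y := by
  unfold dd
  congr 1
  ext m
  exact Jz_shift hn c (by positivity)

lemma fract_eq_add (y : ℝ) : Int.fract y = y + ((-⌊y⌋ : ℤ) : ℝ) := by
  rw [Int.fract]; push_cast; ring

lemma InA_fract (hn : 2 ≤ n) (y : ℝ) : InA n Qd (Int.fract y) ↔ InA n Qd y := by
  rw [fract_eq_add y]; exact InA_shift hn _

lemma dd_fract (hn : 2 ≤ n) (y : ℝ) : dd n Qd (Int.fract y) = dd n Qd y := by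
  rw [fract_eq_add y]; exact dd_shift hn _ _

lemma dd_le (y : ℝ) (m : ℕ) (h : Jz n Qd (m : ℤ) y) : dd n Qd y ≤ m :=
  Nat.sInf_le h

lemma dd_spec (y : ℝ) (h : InA n Qd y) : Jz n Qd (dd n Qd y : ℤ) y :=
  Nat.sInf_mem h

/-- the computational kernel -/
lemma kernel (hn : 2 ≤ n) (u v B TB : ℝ) (c w k k' : ℤ)
    (huv : u = TB + (n : ℝ) ^ w * (v - B) + (c : ℝ))
    (hB : II (B * Qd)) (hTB : II (TB * Qd))
    (hk' : 0 ≤ k') (hk : 0 ≤ k) (hkk : k = k' + w) :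
    (Jz n Qd k' u ↔ Jz n Qd k v) := by
  have hG : II (u * (Qd * (n:ℝ) ^ k') - v * (Qd * (n:ℝ) ^ k)) := by
    have hexp : u * (Qd * (n:ℝ) ^ k') - v * (Qd * (n:ℝ) ^ k)
        = (TB * Qd) * (n:ℝ) ^ k' - (B * Qd) * (n:ℝ) ^ k + ((c:ℝ) * Qd) * (n:ℝ) ^ k' := by
      rw [huv, hkk, zpow_add₀ (nn_ne hn)]
      ring
    rw [hexp]
    exact ((hTB.mul (II.zpow_nonneg n hk')).sub (hB.mul (II.zpow_nonneg n hk))).add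
      (((II.int c).mul (II.nat Qd)).mul (II.zpow_nonneg n hk'))
  unfold Jz
  constructor
  · intro h
    have he : v * (Qd * (n:ℝ) ^ k)
        = u * (Qd * (n:ℝ) ^ k') - (u * (Qd * (n:ℝ) ^ k') - v * (Qd * (n:ℝ) ^ k)) := by ring
    rw [he]; exact h.sub hG
  · intro h
    have he : u * (Qd * (n:ℝ) ^ k')
        = v * (Qd * (n:ℝ) ^ k) + (u * (Qd * (n:ℝ) ^ k') - v * (Qd * (n:ℝ) ^ k)) := by ring
    rw [he]; exact h.add hG


/-! ### same piece when no breakpoint in between -/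

lemma piece_eq_of_no_break {K : ℕ} (b : Fin (K + 1) → ℚ) (hK : 0 < K)
    (hb0 : b 0 = 0) (hbK : b (Fin.last K) = 1) (hmb : StrictMono b)
    {u v : ℝ} (huv : u < v) (h1 : v - u < 1)
    (hno : ∀ (l : Fin (K + 1)) (m : ℤ), ((b l : ℚ) : ℝ) + m ∉ Set.Ioc u v) :
    pieceAux b hK (Int.fract u) = pieceAux b hK (Int.fract v) := by
  have hfl : ⌊u⌋ = ⌊v⌋ := by
    by_contra hne
    have hlt : ⌊u⌋ < ⌊v⌋ := lt_of_le_of_ne (Int.floor_le_floor huv.le) hne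
    refine hno 0 ⌊v⌋ ?_
    rw [hb0]
    constructor
    · push_cast
      have h2 : (⌊u⌋ : ℝ) + 1 ≤ (⌊v⌋ : ℝ) := by exact_mod_cast hlt
      have := Int.lt_floor_add_one u
      linarith
    · push_cast
      have := Int.floor_le v
      linarith
  have hfr : Int.fract u < Int.fract v := by
    rw [Int.fract, Int.fract, hfl]
    linarith
  set cu := pieceAux b hK (Int.fract u) with hcu
  set cv := pieceAux b hK (Int.fract v) with hcv
  rcases lt_trichotomy cu cv with hlt | heq | hlt
  · exfalso
    -- breakpoint b (cu.succ) + ⌊u⌋ lies in (u, v]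
    refine hno cu.succ ⌊u⌋ ?_
    have hsucc_le : cu.succ ≤ cv.castSucc := by
      have : cu.val + 1 ≤ cv.val := hlt
      simpa [Fin.le_def] using this
    have hb1 : ((b cu.succ : ℚ) : ℝ) ≤ ((b cv.castSucc : ℚ) : ℝ) := by
      exact_mod_cast hmb.monotone hsucc_le
    have hb2 : ((b cv.castSucc : ℚ) : ℝ) ≤ Int.fract v :=
      pieceAux_le b hK hb0 (Int.fract_nonneg v)
    have hb3 : Int.fract u < ((b cu.succ : ℚ) : ℝ) :=
      pieceAux_lt b hK hbK (Int.fract_lt_one u)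
    have hu : u = (⌊u⌋ : ℝ) + Int.fract u := by rw [Int.fract]; ring
    have hv : v = (⌊v⌋ : ℝ) + Int.fract v := by rw [Int.fract]; ring
    have hflR : ((⌊u⌋ : ℤ) : ℝ) = ((⌊v⌋ : ℤ) : ℝ) := by rw [hfl]
    constructor
    · linarith
    · linarith
  · exact heq
  · exfalso
    have hsucc_le : cv.succ ≤ cu.castSucc := by
      have : cv.val + 1 ≤ cu.val := hlt
      simpa [Fin.le_def] using this
    have hb1 : ((b cv.succ : ℚ) : ℝ) ≤ ((b cu.castSucc : ℚ) : ℝ) := by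
      exact_mod_cast hmb.monotone hsucc_le
    have hb2 : ((b cu.castSucc : ℚ) : ℝ) ≤ Int.fract u :=
      pieceAux_le b hK hb0 (Int.fract_nonneg u)
    have hb3 : Int.fract v < ((b cv.succ : ℚ) : ℝ) :=
      pieceAux_lt b hK hbK (Int.fract_lt_one v)
    linarith

/-! ### best approximation denominators -/

noncomputable def DN (ξ : ℝ) (r : ℕ) : ℝ := |r * ξ - round ((r : ℝ) * ξ)|

lemma DN_le (ξ : ℝ) (r : ℕ) (m : ℤ) : DN ξ r ≤ |(r : ℝ) * ξ - m| :=
  round_le ((r : ℝ) * ξ) m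

lemma DN_pos {ξ : ℝ} (hirr : Irrational ξ) {r : ℕ} (hr : 0 < r) : 0 < DN ξ r := by
  rw [DN, abs_pos, sub_ne_zero]
  intro h
  refine hirr ⟨(round ((r:ℝ) * ξ) : ℚ) / (r : ℚ), ?_⟩
  have hr' : ((r : ℝ)) ≠ 0 := by positivity
  push_cast
  field_simp
  linarith [h]

lemma exists_best {ξ : ℝ} (hirr : Irrational ξ) (N : ℕ) :
    ∃ q : ℕ, N < q ∧ 0 < q ∧ ∀ r : ℕ, 0 < r → r < q → DN ξ q < DN ξ r := by
  classical
  -- a positive lower bound for DN on [1, N]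
  have hlow : ∃ ε : ℝ, 0 < ε ∧ ∀ r : ℕ, 0 < r → r ≤ N → ε ≤ DN ξ r := by
    induction N with
    | zero => exact ⟨1, by norm_num, fun r hr h0 => by omega⟩
    | succ N ih =>
        obtain ⟨ε, hε, hεle⟩ := ih
        refine ⟨min ε (DN ξ (N + 1)), lt_min hε (DN_pos hirr (by omega)), ?_⟩
        intro r hr hrN
        rcases Nat.lt_succ_iff_lt_or_eq.1 (Nat.lt_succ_of_le hrN) with h | h
        · exact le_trans (min_le_left _ _) (hεle r hr (by omega))
        · rw [h]
          exact min_le_right _ _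
  obtain ⟨ε, hε, hεle⟩ := hlow
  -- Dirichlet: some q with DN ξ q < ε
  obtain ⟨n₁, hn₁⟩ := exists_nat_one_div_lt hε
  obtain ⟨j, k, hk0, hkn, hjk⟩ := Real.exists_int_int_abs_mul_sub_le ξ
    (n := n₁ + 1) (by omega)
  have hkq : (0 : ℕ) < k.toNat := by omega
  have hq0 : DN ξ k.toNat < ε := by
    have h1 : DN ξ k.toNat ≤ |(k.toNat : ℝ) * ξ - j| := DN_le ξ k.toNat j
    have h2 : ((k.toNat : ℝ)) = (k : ℝ) := by exact_mod_cast Int.toNat_of_nonneg hk0.le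
    rw [h2] at h1
    have h3 : (1 : ℝ) / (n₁ + 1 + 1) ≤ 1 / (n₁ + 1) := by
      apply one_div_le_one_div_of_le <;> push_cast <;> linarith
    calc DN ξ k.toNat ≤ |(k : ℝ) * ξ - j| := h1
      _ ≤ 1 / ((n₁ + 1 : ℕ) + 1) := hjk
      _ ≤ 1 / (n₁ + 1) := by push_cast; push_cast at h3; linarith
      _ < ε := hn₁
  set S : Set ℕ := {q : ℕ | 0 < q ∧ DN ξ q < ε} with hS
  have hSne : S.Nonempty := ⟨k.toNat, hkq, hq0⟩
  set q : ℕ := sInf S with hq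
  have hqmem : q ∈ S := Nat.sInf_mem hSne
  refine ⟨q, ?_, hqmem.1, ?_⟩
  · by_contra h
    push_neg at h
    exact absurd (hεle q hqmem.1 h) (not_le.2 hqmem.2)
  · intro r hr hrq
    have : r ∉ S := Nat.notMem_of_lt_sInf hrq
    rw [hS] at this
    simp only [Set.mem_setOf_eq, not_and, not_lt] at this
    exact lt_of_lt_of_le hqmem.2 (this hr)

lemma pow_lt_of_tau (F : CircleDeg1Lift) (q : ℕ) (m : ℤ)
    (h : (q : ℝ) * F.translationNumber < m) (y : ℝ) : (F ^ q) y < y + m := by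
  by_contra h'
  push_neg at h'
  have h2 := CircleDeg1Lift.le_translationNumber_of_add_int_le (f := F ^ q) h'
  rw [F.translationNumber_pow] at h2
  linarith

lemma lt_pow_of_tau (F : CircleDeg1Lift) (q : ℕ) (m : ℤ)
    (h : (m : ℝ) < q * F.translationNumber) (y : ℝ) : y + m < (F ^ q) y := by
  by_contra h'
  push_neg at h'
  have h2 := CircleDeg1Lift.translationNumber_le_of_le_add_int (f := F ^ q) h'
  rw [F.translationNumber_pow] at h2
  linarith


end RRN

set_option maxHeartbeats 4000000 in
/-- Theorem A: a PL⁺ circle homeomorphism mapping rationals to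
rationals, with rational break points and derivatives powers of a fixed `n ≥ 2`,
has rational rotation number. -/
theorem rational_rotation_number_of_PL (n : ℕ) (hn : 2 ≤ n)
    (t : ℝ → ℝ) (ht : IsCircleLift t)
    (hrat : ∀ q : ℚ, ∃ q' : ℚ, t (q : ℝ) = (q' : ℝ))
    (K : ℕ) (b : Fin (K + 1) → ℚ) (z : Fin K → ℤ)
    (hPL : IsPLWithData t n K b z) :
    ∃ s : ℚ, HasTransNum t (s : ℝ) := by
  classical
  obtain ⟨hcont, hmono, hbij, hlift⟩ := ht
  -- the circle lift structure
  set F : CircleDeg1Lift :=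
    { toFun := t
      monotone' := hmono.monotone
      map_add_one' := hlift } with hFdef
  have hF : ∀ y, F y = t y := fun _ => rfl
  set τ : ℝ := F.translationNumber with hτdef
  have htend : HasTransNum t τ := by
    have h0 := F.tendsto_translation_number₀
    refine h0.congr fun m => ?_
    have hFc : ⇑F = t := rfl
    simp [CircleDeg1Lift.coe_pow, hFc]
  by_cases hQ : ∃ s : ℚ, (s : ℝ) = τ
  · obtain ⟨s, hs⟩ := hQ
    exact ⟨s, hs ▸ htend⟩
  · exfalso
    have hirr : Irrational τ := fun ⟨s, hs⟩ => hQ ⟨s, hs⟩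
    -- ## the bi-infinite orbit of 0
    set P : Equiv.Perm ℝ := Equiv.ofBijective t hbij with hPdef
    have hP : ∀ y, P y = t y := fun _ => rfl
    set x : ℤ → ℝ := fun k => (P ^ k) 0 with hxdef
    have hx : ∀ k : ℤ, x (k + 1) = t (x k) := by
      intro k
      have h1 : P ^ (k + 1) = P * P ^ k := by rw [add_comm, zpow_one_add]
      simp only [hxdef, h1, Equiv.Perm.mul_apply, hP]
    have hxiter : ∀ (j : ℤ) (q : ℕ), x (j + q) = t^[q] (x j) := by
      intro j q
      induction q with
      | zero => simp
      | succ q ih =>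
          have h2 : (j + (q + 1 : ℕ) : ℤ) = (j + q) + 1 := by push_cast; ring
          rw [h2, hx, ih]
          exact (Function.iterate_succ_apply' t q (x j)).symm
    -- ## one point comparisons
    have hFc : ⇑F = t := rfl
    have hA1 : ∀ (q : ℕ) (m : ℤ) (y : ℝ), (q : ℝ) * τ < m → t^[q] y < y + m := by
      intro q m y h
      have := RRN.pow_lt_of_tau F q m h y
      rwa [CircleDeg1Lift.coe_pow, hFc] at this
    have hA2 : ∀ (q : ℕ) (m : ℤ) (y : ℝ), (m : ℝ) < q * τ → y + m < t^[q] y := by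
      intro q m y h
      have := RRN.lt_pow_of_tau F q m h y
      rwa [CircleDeg1Lift.coe_pow, hFc] at this
    -- irrationality: k τ never an integer
    have hirrne : ∀ (k m : ℤ), k ≠ 0 → (k : ℝ) * τ ≠ (m : ℝ) := by
      intro k m hk he
      refine hQ ⟨(m : ℚ) / (k : ℚ), ?_⟩
      have hk' : (k : ℝ) ≠ 0 := Int.cast_ne_zero.2 hk
      push_cast
      field_simp
      linarith [he]
    -- ## order lemma: the orbit is ordered like the rotation by τ
    have ordlt : ∀ (i j m : ℤ), (i : ℝ) * τ < j * τ + m → x i < x j + m := by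
      intro i j m h
      rcases le_or_gt j i with hji | hij
      · set q : ℕ := (i - j).toNat with hqdef
        have hq : i = j + (q : ℤ) := by
          rw [hqdef, Int.toNat_of_nonneg (by omega)]; ring
        have hqτ : (q : ℝ) * τ < m := by
          have : ((i : ℝ) - j) * τ < m := by ring_nf; ring_nf at h; linarith
          rw [hq] at this; push_cast at this; linarith
        rw [hq, hxiter j q]
        exact hA1 q m (x j) hqτ
      · set q : ℕ := (j - i).toNat with hqdef
        have hq : j = i + (q : ℤ) := by
          rw [hqdef, Int.toNat_of_nonneg (by omega)]; ring
        have hqτ : ((-m : ℤ) : ℝ) < q * τ := by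
          have : (-m : ℝ) < ((j : ℝ) - i) * τ := by ring_nf; ring_nf at h; push_cast; linarith
          rw [hq] at this; push_cast at this; push_cast; linarith
        have := hA2 q (-m) (x i) hqτ
        rw [hq, hxiter i q]
        push_cast at this
        linarith
    have ordlt' : ∀ (i j m : ℤ), x i < x j + m → (i : ℝ) * τ < j * τ + m := by
      intro i j m h
      rcases lt_trichotomy ((i : ℝ) * τ) ((j : ℝ) * τ + m) with h' | h' | h'
      · exact h'
      · exfalso
        have hij : i = j := by
          by_contra hne
          refine hirrne (i - j) m (by omega) ?_
          push_cast; linarith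
        subst hij
        have hm : (m : ℝ) = 0 := by linarith
        have : m = 0 := by exact_mod_cast hm
        subst this
        simp at h
      · exfalso
        have : x j < x i + (-m : ℤ) := by
          refine ordlt j i (-m) ?_
          push_cast; linarith
        push_cast at this
        linarith
    -- ## no periodic points; orbit is injective mod 1
    have hnoper : ∀ (q : ℕ) (p : ℤ) (y : ℝ), 0 < q → t^[q] y ≠ y + p := by
      intro q p y hq0 he
      have hτe : τ = (p : ℝ) / q := by
        rw [hτdef]
        refine (F.translationNumber_eq_rat_iff hcont hq0).2 ⟨y, ?_⟩
        rw [CircleDeg1Lift.coe_pow, hFc]; exact he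
      refine hQ ⟨(p : ℚ) / (q : ℚ), ?_⟩
      rw [hτe]; push_cast; ring
    have hxinj : ∀ a c : ℤ, Int.fract (x a) = Int.fract (x c) → a = c := by
      intro a c hfr
      by_contra hne
      have heq : x a = x c + ((⌊x a⌋ - ⌊x c⌋ : ℤ) : ℝ) := by
        have h1 : Int.fract (x a) = x a - ⌊x a⌋ := rfl
        have h2 : Int.fract (x c) = x c - ⌊x c⌋ := rfl
        rw [h1, h2] at hfr
        push_cast
        linarith
      rcases lt_trichotomy a c with hac | hac | hac
      · set q : ℕ := (c - a).toNat with hqdef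
        have hq : c = a + (q : ℤ) := by rw [hqdef, Int.toNat_of_nonneg (by omega)]; ring
        refine hnoper q (⌊x c⌋ - ⌊x a⌋) (x a) (by omega) ?_
        rw [← hxiter a q, ← hq]
        push_cast at heq ⊢
        linarith
      · exact hne hac
      · set q : ℕ := (a - c).toNat with hqdef
        have hq : a = c + (q : ℤ) := by rw [hqdef, Int.toNat_of_nonneg (by omega)]; ring
        refine hnoper q (⌊x a⌋ - ⌊x c⌋) (x c) (by omega) ?_
        rw [← hxiter c q, ← hq]
        exact heq
    -- ## PL data and piece index
    obtain ⟨hb0, hbK, hmb, hpl⟩ := hPL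
    have hK : 0 < K := by
      rcases Nat.eq_zero_or_pos K with h | h
      · exfalso
        subst h
        rw [show (Fin.last 0) = 0 from rfl, hb0] at hbK
        exact absurd hbK (by norm_num)
      · exact h
    set ι : ℝ → Fin K := fun y => RRN.pieceAux b hK (Int.fract y) with hιdef
    have hι1 : ∀ y : ℝ, ((b (ι y).castSucc : ℚ) : ℝ) ≤ Int.fract y :=
      fun y => RRN.pieceAux_le b hK hb0 (Int.fract_nonneg y)
    have hι2 : ∀ y : ℝ, Int.fract y < ((b (ι y).succ : ℚ) : ℝ) :=
      fun y => RRN.pieceAux_lt b hK hbK (Int.fract_lt_one y)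
    have hιshift : ∀ (y : ℝ) (c : ℤ), ι (y + c) = ι y := by
      intro y c
      simp only [hιdef, Int.fract_add_intCast]
    have hmapint : ∀ (y : ℝ) (c : ℤ), t (y + c) = t y + c := by
      intro y c
      have h := F.map_add_int y c
      rwa [hFc] at h
    have tPiece : ∀ y : ℝ, t y = t ((b (ι y).castSucc : ℚ) : ℝ)
        + (n : ℝ) ^ (z (ι y)) * (Int.fract y - ((b (ι y).castSucc : ℚ) : ℝ))
        + ((⌊y⌋ : ℤ) : ℝ) := by
      intro y
      have h1 := hpl (ι y) (Int.fract y) ⟨hι1 y, (hι2 y).le⟩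
      have h2 : t y = t (Int.fract y) + ((⌊y⌋ : ℤ) : ℝ) := by
        conv_lhs => rw [← Int.fract_add_floor y]
        exact hmapint _ _
      rw [h2, h1]
    -- ## rational data
    set tb : Fin (K + 1) → ℚ := fun l => Classical.choose (hrat (b l)) with htbdef
    have htb : ∀ l, t ((b l : ℚ) : ℝ) = ((tb l : ℚ) : ℝ) :=
      fun l => Classical.choose_spec (hrat (b l))
    set Qd : ℕ := (∏ l, (b l).den) * (∏ l, (tb l).den) with hQddef
    have hQdpos : 0 < Qd :=
      Nat.mul_pos (Finset.prod_pos fun l _ => (b l).den_pos)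
        (Finset.prod_pos fun l _ => (tb l).den_pos)
    have hQb : ∀ l : Fin (K + 1), RRN.II (((b l : ℚ) : ℝ) * Qd) := by
      intro l
      refine RRN.rat_mul_den_int _ _ ?_
      exact Dvd.dvd.mul_right (Finset.dvd_prod_of_mem _ (Finset.mem_univ l)) _
    have hQtb : ∀ l : Fin (K + 1), RRN.II (t ((b l : ℚ) : ℝ) * Qd) := by
      intro l
      rw [htb l]
      refine RRN.rat_mul_den_int _ _ ?_
      exact Dvd.dvd.mul_left (Finset.dvd_prod_of_mem _ (Finset.mem_univ l)) _
    -- ## the level (denominator) function along the orbit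
    set M : ℕ := Finset.univ.sup (fun i : Fin K => (z i).natAbs) with hMdef
    have hzM : ∀ i : Fin K, (z i).natAbs ≤ M := fun i => Finset.le_sup (f := fun i : Fin K => (z i).natAbs) (Finset.mem_univ i)
    have stepExact : ∀ y : ℝ, RRN.InA n Qd y → M < RRN.dd n Qd y →
        RRN.InA n Qd (t y) ∧ ((RRN.dd n Qd (t y) : ℤ) = (RRN.dd n Qd y : ℤ) - z (ι y)) := by
      intro y hy hMd
      have hwM := hzM (ι y)
      set e : ℕ := RRN.dd n Qd y with hedef
      set w : ℤ := z (ι y) with hwdef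
      have hfr : RRN.Jz n Qd (e : ℤ) (Int.fract y) := by
        have h1 : RRN.InA n Qd (Int.fract y) := (RRN.InA_fract hn y).2 hy
        have h2 := RRN.dd_spec _ h1
        rwa [RRN.dd_fract hn y] at h2
      set m₁ : ℕ := ((e : ℤ) - w).toNat with hm₁def
      have hm₁ : (m₁ : ℤ) = (e : ℤ) - w := Int.toNat_of_nonneg (by omega)
      have hker := RRN.kernel (Qd := Qd) hn (t y) (Int.fract y) _ _ ⌊y⌋ w (e : ℤ) (m₁ : ℤ)
        (tPiece y) (hQb _) (hQtb _) (by positivity) (by positivity) (by omega)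
      have hJ1 : RRN.Jz n Qd (m₁ : ℤ) (t y) := hker.mpr hfr
      have hInA : RRN.InA n Qd (t y) := ⟨m₁, hJ1⟩
      refine ⟨hInA, ?_⟩
      have hle : RRN.dd n Qd (t y) ≤ m₁ := RRN.dd_le _ _ hJ1
      rcases eq_or_lt_of_le hle with he' | he'
      · rw [he', hm₁]
      · exfalso
        have hJ2 : RRN.Jz n Qd ((m₁ : ℤ) - 1) (t y) := by
          have h3 := RRN.dd_spec _ hInA
          exact RRN.Jz_mono hn (by omega) h3
        have hker2 := RRN.kernel (Qd := Qd) hn (t y) (Int.fract y) _ _ ⌊y⌋ w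
          ((e : ℤ) - 1) ((m₁ : ℤ) - 1)
          (tPiece y) (hQb _) (hQtb _) (by omega) (by omega) (by omega)
        have hJ3 : RRN.Jz n Qd ((e : ℤ) - 1) (Int.fract y) := hker2.mp hJ2
        have hJ4 : RRN.Jz n Qd (((e - 1 : ℕ)) : ℤ) (Int.fract y) := by
          have hc : (((e - 1 : ℕ)) : ℤ) = (e : ℤ) - 1 := by omega
          rw [hc]; exact hJ3
        have h5 := RRN.dd_le _ _ hJ4
        rw [RRN.dd_fract hn y] at h5
        omega
    have stepCoarseF : ∀ y : ℝ, RRN.InA n Qd y →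
        RRN.InA n Qd (t y) ∧ RRN.dd n Qd (t y) ≤ RRN.dd n Qd y + M := by
      intro y hy
      have hwM := hzM (ι y)
      set e : ℕ := RRN.dd n Qd y with hedef
      set w : ℤ := z (ι y) with hwdef
      have hfr : RRN.Jz n Qd (e : ℤ) (Int.fract y) := by
        have h1 : RRN.InA n Qd (Int.fract y) := (RRN.InA_fract hn y).2 hy
        have h2 := RRN.dd_spec _ h1
        rwa [RRN.dd_fract hn y] at h2
      have hup : RRN.Jz n Qd ((e : ℤ) + M + w) (Int.fract y) :=
        RRN.Jz_mono hn (by omega) hfr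
      have hker := RRN.kernel (Qd := Qd) hn (t y) (Int.fract y) _ _ ⌊y⌋ w
        ((e : ℤ) + M + w) ((e : ℤ) + M)
        (tPiece y) (hQb _) (hQtb _) (by omega) (by omega) (by ring)
      have hJ : RRN.Jz n Qd ((e : ℤ) + M) (t y) := hker.mpr hup
      have hJ' : RRN.Jz n Qd (((e + M : ℕ)) : ℤ) (t y) := by
        have hc : (((e + M : ℕ)) : ℤ) = (e : ℤ) + M := by omega
        rw [hc]; exact hJ
      exact ⟨⟨e + M, hJ'⟩, RRN.dd_le _ _ hJ'⟩
    have stepCoarseB : ∀ y : ℝ, RRN.InA n Qd (t y) → RRN.InA n Qd y := by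
      intro y hy
      have hwM := hzM (ι y)
      set e' : ℕ := RRN.dd n Qd (t y) with he'def
      set w : ℤ := z (ι y) with hwdef
      have hJ : RRN.Jz n Qd (e' : ℤ) (t y) := RRN.dd_spec _ hy
      have hJ2 : RRN.Jz n Qd ((e' : ℤ) + M) (t y) := RRN.Jz_mono hn (by omega) hJ
      have hker := RRN.kernel (Qd := Qd) hn (t y) (Int.fract y) _ _ ⌊y⌋ w
        ((e' : ℤ) + M + w) ((e' : ℤ) + M)
        (tPiece y) (hQb _) (hQtb _) (by omega) (by omega) (by ring)
      have hJ3 : RRN.Jz n Qd ((e' : ℤ) + M + w) (Int.fract y) := hker.mp hJ2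
      have hm : ((((e' : ℤ) + M + w).toNat : ℤ)) = (e' : ℤ) + M + w :=
        Int.toNat_of_nonneg (by omega)
      have hInAf : RRN.InA n Qd (Int.fract y) := ⟨_, by rw [hm]; exact hJ3⟩
      exact (RRN.InA_fract hn y).1 hInAf
    have hxA : ∀ k : ℤ, RRN.InA n Qd (x k) := by
      intro k
      induction k using Int.induction_on with
      | zero =>
          refine ⟨0, 0, ?_⟩
          have hx0 : x 0 = 0 := by simp [hxdef]
          rw [hx0]
          norm_num
      | succ k ih =>
          rw [hx]
          exact (stepCoarseF _ ih).1
      | pred k ih =>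
          have h' : x (-(k : ℤ)) = t (x (-(k : ℤ) - 1)) := by
            rw [← hx]
            congr 1
            ring
          rw [h'] at ih
          exact stepCoarseB _ ih
    -- ## level sequence along the orbit, exceptional times, telescoping
    set dZ : ℤ → ℤ := fun k => (RRN.dd n Qd (x k) : ℤ) with hdZdef
    set zz : ℤ → ℤ := fun k => z (ι (x k)) with hzzdef
    have hdZnn : ∀ k : ℤ, 0 ≤ dZ k := fun k => by simp [hdZdef]
    set G : ℕ → Finset ℝ := fun B => (Finset.range (Qd * n ^ B)).image
      (fun c : ℕ => (c : ℝ) / ((Qd * n ^ B : ℕ) : ℝ)) with hGdef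
    have hmemG : ∀ (B : ℕ) (k : ℤ), RRN.dd n Qd (x k) ≤ B →
        Int.fract (x k) ∈ G B := by
      intro B k hB
      have hJ : RRN.Jz n Qd (B : ℤ) (Int.fract (x k)) := by
        have h1 : RRN.InA n Qd (Int.fract (x k)) := (RRN.InA_fract hn _).2 (hxA k)
        have h2 := RRN.dd_spec _ h1
        have h3 : RRN.dd n Qd (Int.fract (x k)) ≤ B := by
          rw [RRN.dd_fract hn]; exact hB
        exact RRN.Jz_mono hn (by omega) h2
      obtain ⟨c, hc⟩ := hJ
      have hcast : ((Qd * n ^ B : ℕ) : ℝ) = (Qd : ℝ) * (n : ℝ) ^ (B : ℤ) := by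
        push_cast
        rw [zpow_natCast]
      have hpow : (0:ℝ) < (Qd : ℝ) * (n:ℝ) ^ (B:ℤ) := by
        have h4 : (0:ℝ) < (n:ℝ) := by positivity
        have h5 : (0:ℝ) < (Qd:ℝ) := by exact_mod_cast hQdpos
        positivity
      have h0 : 0 ≤ Int.fract (x k) := Int.fract_nonneg _
      have h1' : Int.fract (x k) < 1 := Int.fract_lt_one _
      have hc0 : (0:ℝ) ≤ (c:ℝ) := by rw [← hc]; positivity
      have hcQ : (c:ℝ) < (Qd : ℝ) * (n:ℝ) ^ (B:ℤ) := by
        rw [← hc]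
        nlinarith
      rw [hGdef]
      simp only [Finset.mem_image, Finset.mem_range]
      have hcz : (0:ℤ) ≤ c := by exact_mod_cast hc0
      have hctn : ((c.toNat : ℕ) : ℝ) = (c : ℝ) := by exact_mod_cast Int.toNat_of_nonneg hcz
      refine ⟨c.toNat, ?_, ?_⟩
      · have h6 : (c.toNat : ℝ) < ((Qd * n ^ B : ℕ) : ℝ) := by
          rw [hctn, hcast]
          exact hcQ
        exact_mod_cast h6
      · rw [hctn, hcast, div_eq_iff (ne_of_gt hpow)]
        linarith [hc]
    have hBadfin : {k : ℤ | RRN.dd n Qd (x k) ≤ M}.Finite := by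
      apply Set.Finite.of_finite_image (f := fun k => Int.fract (x k))
      · apply Set.Finite.subset (Finset.finite_toSet (G M))
        rintro y ⟨k, hk, rfl⟩
        exact hmemG M k hk
      · intro a ha b hb hab
        exact hxinj a b hab
    obtain ⟨T₀, hT₀⟩ : ∃ T₀ : ℕ, ∀ k : ℤ, RRN.dd n Qd (x k) ≤ M → k.natAbs ≤ T₀ := by
      refine ⟨hBadfin.toFinset.sup (fun k => k.natAbs), fun k hk => ?_⟩
      exact Finset.le_sup ((Set.Finite.mem_toFinset _).2 hk)
    set T : ℤ := (T₀ : ℤ) + 1 with hTdef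
    have hTpos : 0 < T := by omega
    have hgood : ∀ k : ℤ, (T ≤ k ∨ k ≤ -T) → M < RRN.dd n Qd (x k) := by
      intro k hk
      by_contra h
      push_neg at h
      have := hT₀ k h
      omega
    have hstep : ∀ k : ℤ, (T ≤ k ∨ k ≤ -T) → dZ (k + 1) = dZ k - zz k := by
      intro k hk
      have h := stepExact (x k) (hxA k) (hgood k hk)
      rw [← hx k] at h
      simpa [hdZdef, hzzdef] using h.2
    set disc : ℤ → ℤ := fun k => dZ (k + 1) - dZ k + zz k with hdiscdef
    have hdisc0 : ∀ k : ℤ, (T ≤ k ∨ k ≤ -T) → disc k = 0 := by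
      intro k hk
      have := hstep k hk
      simp only [hdiscdef]
      omega
    set E : ℤ := ∑ k ∈ Finset.Icc (-T) (T - 1), |disc k| with hEdef
    have htel : ∀ (a : ℤ) (q : ℕ),
        dZ (a + q) - dZ a = (∑ i ∈ Finset.range q, (- zz (a + i)))
          + (∑ i ∈ Finset.range q, disc (a + i)) := by
      intro a q
      induction q with
      | zero => simp
      | succ q ih =>
          rw [Finset.sum_range_succ, Finset.sum_range_succ]
          have hq1 : (a + ((q : ℕ) + 1 : ℕ) : ℤ) = (a + q) + 1 := by push_cast; ring
          rw [hq1]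
          simp only [hdiscdef]
          push_cast at ih ⊢
          linarith
    have hS1 : ∀ q : ℕ, dZ (T + q) - dZ T = ∑ i ∈ Finset.range q, (- zz (T + i)) := by
      intro q
      have h := htel T q
      have hz0 : ∀ i ∈ Finset.range q, disc (T + i) = 0 := by
        intro i _
        exact hdisc0 _ (Or.inl (by omega))
      rw [Finset.sum_congr rfl hz0] at h
      simpa using h
    have hS2 : ∀ q : ℕ,
        |dZ T - dZ (T - q) - ∑ i ∈ Finset.range q, (- zz (T - q + i))| ≤ E := by
      intro q
      have h := htel (T - q) q
      have h2 : (T - q + q : ℤ) = T := by ring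
      rw [h2] at h
      have h3 : dZ T - dZ (T - (q:ℤ)) - ∑ i ∈ Finset.range q, (- zz (T - q + i))
          = ∑ i ∈ Finset.range q, disc (T - q + i) := by linarith
      rw [h3]
      have h4 : |∑ i ∈ Finset.range q, disc (T - q + i)|
          ≤ ∑ i ∈ Finset.range q, |disc (T - q + i)| := Finset.abs_sum_le_sum_abs _ _
      refine h4.trans ?_
      have hinj : Set.InjOn (fun i : ℕ => T - q + (i : ℤ)) (Finset.range q) := by
        intro a _ b _ hab
        simp only at hab
        omega
      rw [show (∑ i ∈ Finset.range q, |disc (T - q + i)|)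
          = ∑ k ∈ (Finset.range q).image (fun i : ℕ => T - q + (i : ℤ)), |disc k| from
        (Finset.sum_image (f := fun k => |disc k|) (g := fun i : ℕ => T - q + (i : ℤ))
          (fun a ha b hb hab => hinj ha hb hab)).symm]
      rw [← Finset.sum_filter_of_ne (p := fun k => k ∈ Finset.Icc (-T) (T-1))
        (fun k _ hne => ?_)]
      · refine Finset.sum_le_sum_of_subset_of_nonneg ?_ (fun k _ _ => abs_nonneg _)
        intro k hk
        exact (Finset.mem_filter.1 hk).2
      · by_contra hmem
        have : disc k = 0 := by
          apply hdisc0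
          simp only [Finset.mem_Icc] at hmem
          omega
        simp [this] at hne
    -- ## interval facts from the order structure
    have hcast2 : ∀ (a : ℤ) (q : ℕ), ((a + (q:ℤ) : ℤ) : ℝ) = (a : ℝ) + (q : ℝ) := by
      intro a q; push_cast; ring
    -- ## oscillation bound at best approximation denominators
    have hosc : ∀ q : ℕ, 0 < q →
        (∀ r : ℕ, 0 < r → r < q → RRN.DN τ q < RRN.DN τ r) →
        |(∑ i ∈ Finset.range q, (- zz (T + i))) - ∑ i ∈ Finset.range q, (- zz (T - q + i))|
          ≤ 2 * (M : ℤ) * (K + 1) := by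
      intro q hq hbest
      set p : ℤ := round ((q : ℝ) * τ) with hpdef
      set δ : ℝ := (q : ℝ) * τ - p with hδdef
      have hδne : δ ≠ 0 := by
        intro h
        refine hirrne q p (by omega) ?_
        have : (q : ℝ) * τ = p := by rw [hδdef] at h; linarith
        exact_mod_cast this
      have hδabs : |δ| = RRN.DN τ q := rfl
      have hδhalf : |δ| ≤ 1 / 2 := abs_sub_round _
      have hδlt1 : δ < 1 := lt_of_le_of_lt (le_abs_self δ) (lt_of_le_of_lt hδhalf (by norm_num))
      have hδgt1 : (-1 : ℝ) < δ := by
        have h1 := neg_abs_le δ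
        have h2 : |δ| < 1 := lt_of_le_of_lt hδhalf (by norm_num)
        linarith
      -- order facts
      have hordp : ∀ a : ℤ, 0 < δ → x a < x (a + q) - p ∧ x (a + q) - p - x a < 1 := by
        intro a hδ
        constructor
        · have h1 : (a : ℝ) * τ < ((a + (q:ℤ) : ℤ) : ℝ) * τ + ((-p : ℤ) : ℝ) := by
            rw [hcast2]; push_cast
            have : |δ| < 1 := lt_of_le_of_lt hδhalf (by norm_num)
            rw [hδdef] at *
            nlinarith [abs_lt.1 this]
          have := ordlt a (a + q) (-p) h1
          push_cast at this
          linarith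
        · have h1 : ((a + (q:ℤ) : ℤ) : ℝ) * τ < (a : ℝ) * τ + ((p + 1 : ℤ) : ℝ) := by
            rw [hcast2]; push_cast
            have : |δ| < 1 := lt_of_le_of_lt hδhalf (by norm_num)
            rw [hδdef] at *
            nlinarith [abs_lt.1 this]
          have := ordlt (a + q) a (p + 1) h1
          push_cast at this
          linarith
      have hordm : ∀ a : ℤ, δ < 0 → x (a + q) - p < x a ∧ x a - (x (a + q) - p) < 1 := by
        intro a hδ
        constructor
        · have h1 : ((a + (q:ℤ) : ℤ) : ℝ) * τ < (a : ℝ) * τ + ((p : ℤ) : ℝ) := by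
            rw [hcast2]; push_cast
            linarith [hδdef.ge, hδdef.le]
          have := ordlt (a + q) a p h1
          push_cast at this
          linarith
        · have h1 : (a : ℝ) * τ < ((a + (q:ℤ) : ℤ) : ℝ) * τ + ((1 - p : ℤ) : ℝ) := by
            rw [hcast2]; push_cast
            linarith [hδdef.ge, hδdef.le]
          have := ordlt a (a + q) (1 - p) h1
          push_cast at this
          linarith
      -- the intervals
      set lo : ℕ → ℝ := fun i => if 0 < δ then x (T - q + i) else x (T - q + i + q) - p with hlodef
      set hi : ℕ → ℝ := fun i => if 0 < δ then x (T - q + i + q) - p else x (T - q + i) with hhidef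
      have hlohi : ∀ i : ℕ, lo i < hi i ∧ hi i - lo i < 1 := by
        intro i
        by_cases hδ : 0 < δ
        · have := hordp (T - q + i) hδ
          simp only [hlodef, hhidef, if_pos hδ]
          exact ⟨this.1, by linarith [this.2]⟩
        · have hδ' : δ < 0 := lt_of_le_of_ne (le_of_not_gt hδ) hδne
          have := hordm (T - q + i) hδ'
          simp only [hlodef, hhidef, if_neg hδ]
          exact ⟨this.1, by linarith [this.2]⟩
      -- breakpoint witnesses
      set hasbp : ℕ → Prop := fun i => ∃ l : Fin (K + 1), ∃ m : ℤ,
        ((b l : ℚ) : ℝ) + m ∈ Set.Ioc (lo i) (hi i) with hhasdef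
      set wl : ℕ → Fin (K + 1) := fun i =>
        if h : hasbp i then Classical.choose h else ⟨0, by omega⟩ with hwldef
      set wm : ℕ → ℤ := fun i =>
        if h : hasbp i then Classical.choose (Classical.choose_spec h) else 0 with hwmdef
      have hw : ∀ i, hasbp i →
          ((b (wl i) : ℚ) : ℝ) + wm i ∈ Set.Ioc (lo i) (hi i) := by
        intro i h
        simp only [hwldef, hwmdef, dif_pos h]
        exact Classical.choose_spec (Classical.choose_spec h)
      -- if the pieces differ on a pair, there is a breakpoint witness
      have hιshift' : ∀ (k : ℤ) (c : ℤ), ι (x k - c) = ι (x k) := by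
        intro k c
        have h1 : x k - c = x k + ((-c : ℤ) : ℝ) := by push_cast; ring
        rw [h1, hιshift]
      have hdiffbp : ∀ i : ℕ, zz (T - q + i + q) ≠ zz (T - q + i) → hasbp i := by
        intro i hne
        by_contra hno
        apply hne
        have hnowit : ∀ (l : Fin (K + 1)) (m : ℤ),
            ((b l : ℚ) : ℝ) + m ∉ Set.Ioc (lo i) (hi i) := by
          intro l m hm
          exact hno ⟨l, m, hm⟩
        have hpe := RRN.piece_eq_of_no_break b hK hb0 hbK hmb (hlohi i).1 (hlohi i).2 hnowit
        -- translate to ι equality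
        have hpe' : ι (lo i) = ι (hi i) := hpe
        by_cases hδ : 0 < δ
        · simp only [hlodef, hhidef, if_pos hδ] at hpe'
          rw [hιshift'] at hpe'
          simp only [hzzdef]
          rw [hpe']
        · simp only [hlodef, hhidef, if_neg hδ] at hpe'
          rw [hιshift'] at hpe'
          simp only [hzzdef]
          rw [hpe']
      -- injectivity of the breakpoint label
      have hinjW : ∀ i i' : ℕ, i < q → i' < q → i ≠ i' →
          (hasbp i) → (hasbp i') → wl i = wl i' → False := by
        intro i i' hiq hi'q hne hbi hbi' heql
        obtain ⟨hm1, hm2⟩ := hw i hbi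
        obtain ⟨hm1', hm2'⟩ := hw i' hbi'
        rw [heql] at hm1 hm2
        have hkey : |((i' : ℝ) - i) * τ - ((wm i' - wm i : ℤ) : ℝ)| < |δ| := by
          by_cases hδ : 0 < δ
          · simp only [hlodef, hhidef, if_pos hδ] at hm1 hm2 hm1' hm2'
            have h5 : x (T - q + i) < x ((T - q + i') + q) + ((-p - (wm i' - wm i) : ℤ) : ℝ) := by
              push_cast
              push_cast at hm1 hm2 hm1' hm2'
              linarith
            have h6 := ordlt' (T - q + i) ((T - q + i') + q) (-p - (wm i' - wm i)) h5
            have h7 : x (T - q + i') < x ((T - q + i) + q) + ((-p + (wm i' - wm i) : ℤ) : ℝ) := by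
              push_cast
              push_cast at hm1 hm2 hm1' hm2'
              linarith
            have h8 := ordlt' (T - q + i') ((T - q + i) + q) (-p + (wm i' - wm i)) h7
            push_cast at h6 h8
            rw [abs_of_pos hδ, abs_lt]
            have hδq : (q : ℝ) * τ - p = δ := hδdef.symm
            push_cast
            constructor
            · nlinarith [h6, hδq]
            · nlinarith [h8, hδq]
          · have hδ' : δ < 0 := lt_of_le_of_ne (le_of_not_gt hδ) hδne
            simp only [hlodef, hhidef, if_neg hδ] at hm1 hm2 hm1' hm2'
            have h5 : x ((T - q + i) + q) < x (T - q + i') + ((p - (wm i' - wm i) : ℤ) : ℝ) := by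
              push_cast
              push_cast at hm1 hm2 hm1' hm2'
              linarith
            have h6 := ordlt' ((T - q + i) + q) (T - q + i') (p - (wm i' - wm i)) h5
            have h7 : x ((T - q + i') + q) < x (T - q + i) + ((p + (wm i' - wm i) : ℤ) : ℝ) := by
              push_cast
              push_cast at hm1 hm2 hm1' hm2'
              linarith
            have h8 := ordlt' ((T - q + i') + q) (T - q + i) (p + (wm i' - wm i)) h7
            push_cast at h6 h8
            rw [abs_of_neg hδ', abs_lt]
            have hδq : (q : ℝ) * τ - p = δ := hδdef.symm
            push_cast
            constructor
            · nlinarith [h8, hδq]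
            · nlinarith [h6, hδq]
        -- contradiction with best approximation property
        rcases lt_or_gt_of_ne hne with hlt | hlt
        · set en : ℕ := i' - i with hendef
          have hen0 : 0 < en := by omega
          have henq : en < q := by omega
          have hcasten : ((en : ℕ) : ℝ) = (i' : ℝ) - i := by
            rw [hendef, Nat.cast_sub hlt.le]
          have hDle : RRN.DN τ en ≤ |((i' : ℝ) - i) * τ - ((wm i' - wm i : ℤ) : ℝ)| := by
            rw [← hcasten]
            exact RRN.DN_le τ en (wm i' - wm i)
          have := hbest en hen0 henq
          rw [← hδabs] at this
          linarith
        · set en : ℕ := i - i' with hendef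
          have hen0 : 0 < en := by omega
          have henq : en < q := by omega
          have hcasten : ((en : ℕ) : ℝ) = (i : ℝ) - i' := by
            rw [hendef, Nat.cast_sub hlt.le]
          have hDle : RRN.DN τ en ≤ |((i' : ℝ) - i) * τ - ((wm i' - wm i : ℤ) : ℝ)| := by
            have h9 := RRN.DN_le τ en (wm i - wm i')
            rw [hcasten] at h9
            have h10 : |((i:ℝ) - i') * τ - ((wm i - wm i' : ℤ) : ℝ)|
                = |((i' : ℝ) - i) * τ - ((wm i' - wm i : ℤ) : ℝ)| := by
              rw [← abs_neg]
              congr 1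
              push_cast
              ring
            rw [h10] at h9
            exact h9
          have := hbest en hen0 henq
          rw [← hδabs] at this
          linarith
      -- counting breakpoint classes
      set W : Finset ℕ := (Finset.range q).filter
        (fun i => zz (T - q + i + q) ≠ zz (T - q + i)) with hWdef
      have hWsub : W ⊆ Finset.range q := Finset.filter_subset _ _
      have hcardW : W.card ≤ K + 1 := by
        have hmaps : ∀ i ∈ W, wl i ∈ (Finset.univ : Finset (Fin (K + 1))) :=
          fun i _ => Finset.mem_univ _
        have hinj : Set.InjOn wl W := by
          intro i hiW i' hi'W heq
          by_contra hne
          have hiW' := Finset.mem_filter.1 (Finset.mem_coe.1 hiW)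
          have hi'W' := Finset.mem_filter.1 (Finset.mem_coe.1 hi'W)
          exact hinjW i i' (Finset.mem_range.1 hiW'.1) (Finset.mem_range.1 hi'W'.1) hne
            (hdiffbp i hiW'.2) (hdiffbp i' hi'W'.2) heq
        calc W.card ≤ (Finset.univ : Finset (Fin (K + 1))).card :=
              Finset.card_le_card_of_injOn wl hmaps hinj
          _ = K + 1 := by simp
      -- assembling the sum bound
      have hsplit : (∑ i ∈ Finset.range q, (- zz (T + i)))
            - ∑ i ∈ Finset.range q, (- zz (T - q + i))
          = ∑ i ∈ Finset.range q, (zz (T - q + i) - zz (T - q + i + q)) := by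
        rw [← Finset.sum_sub_distrib]
        refine Finset.sum_congr rfl fun i _ => ?_
        have he : (T + (i : ℤ)) = T - q + i + q := by ring
        rw [he]
        ring
      rw [hsplit]
      have habs := Finset.abs_sum_le_sum_abs
        (fun i : ℕ => zz (T - q + i) - zz (T - q + i + q)) (Finset.range q)
      refine habs.trans ?_
      have hzabs : ∀ k : ℤ, |zz k| ≤ (M : ℤ) := by
        intro k
        have h1 := hzM (ι (x k))
        simp only [hzzdef]
        rw [Int.abs_eq_natAbs]
        exact_mod_cast h1
      have hterm : ∀ i ∈ Finset.range q, |zz (T - q + i) - zz (T - q + i + q)|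
          ≤ if i ∈ W then 2 * (M : ℤ) else 0 := by
        intro i hi
        by_cases hiW : i ∈ W
        · rw [if_pos hiW]
          calc |zz (T - q + i) - zz (T - q + i + q)|
              ≤ |zz (T - q + i)| + |zz (T - q + i + q)| := abs_sub _ _
            _ ≤ 2 * (M : ℤ) := by linarith [hzabs (T - q + i), hzabs (T - q + i + q)]
        · rw [if_neg hiW]
          have hzeq : zz (T - q + i + q) = zz (T - q + i) := by
            by_contra hne
            exact hiW (Finset.mem_filter.2 ⟨hi, hne⟩)
          rw [hzeq]
          simp
      refine (Finset.sum_le_sum hterm).trans ?_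
      rw [← Finset.sum_filter]
      have hWf : (Finset.range q).filter (fun i => i ∈ W) = W := by
        ext i
        simp only [Finset.mem_filter]
        exact ⟨fun h => h.2, fun h => ⟨hWsub h, h⟩⟩
      rw [hWf, Finset.sum_const, nsmul_eq_mul]
      have hc : (W.card : ℤ) ≤ (K : ℤ) + 1 := by exact_mod_cast hcardW
      nlinarith [hc, Int.ofNat_nonneg M, Int.ofNat_nonneg W.card]
    -- ## conclusion: infinitely many orbit points of bounded level
    have hEnn : 0 ≤ E := Finset.sum_nonneg fun k _ => abs_nonneg _
    set Bd : ℤ := 2 * dZ T + E + 2 * (M : ℤ) * ((K : ℤ) + 1) with hBddef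
    have hmain : ∀ q : ℕ, 0 < q →
        (∀ r : ℕ, 0 < r → r < q → RRN.DN τ q < RRN.DN τ r) →
        RRN.dd n Qd (x (T + q)) ≤ Bd.toNat := by
      intro q hq hb
      have h1 := hS1 q
      have h2 := abs_le.1 (hS2 q)
      have h3 := abs_le.1 (hosc q hq hb)
      have h4 := hdZnn (T - q)
      have h5 : dZ (T + q) ≤ Bd := by
        rw [hBddef]
        linarith [h1, h2.1, h2.2, h3.1, h3.2, h4]
      have h6 : dZ (T + q) = (RRN.dd n Qd (x (T + q)) : ℤ) := by simp [hdZdef]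
      omega
    obtain ⟨qf, hqf⟩ : ∃ qf : ℕ → ℕ, ∀ N, N < qf N ∧ 0 < qf N ∧
        (∀ r : ℕ, 0 < r → r < qf N → RRN.DN τ (qf N) < RRN.DN τ r) := by
      choose qf h1 h2 h3 using RRN.exists_best hirr
      exact ⟨qf, fun N => ⟨h1 N, h2 N, h3 N⟩⟩
    set seq : ℕ → ℕ := fun j => Nat.rec (qf 0) (fun _ prev => qf prev) j with hseqdef
    have hseqsucc : ∀ j, seq (j + 1) = qf (seq j) := fun j => rfl
    have hseq0 : seq 0 = qf 0 := rfl
    have hseqmono : StrictMono seq := by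
      apply strictMono_nat_of_lt_succ
      intro j
      rw [hseqsucc]
      exact (hqf (seq j)).1
    have hmem : ∀ j : ℕ, Int.fract (x (T + seq j)) ∈ G Bd.toNat := by
      intro j
      apply hmemG
      rcases j with _ | j
      · rw [hseq0]
        exact hmain (qf 0) (hqf 0).2.1 (hqf 0).2.2
      · rw [hseqsucc]
        exact hmain (qf (seq j)) (hqf (seq j)).2.1 (hqf (seq j)).2.2
    have hinj2 : Function.Injective (fun j : ℕ => Int.fract (x (T + seq j))) := by
      intro a c hac
      have h1 := hxinj _ _ hac
      have h2 : seq a = seq c := by omega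
      exact hseqmono.injective h2
    have hinf : ((G Bd.toNat : Finset ℝ) : Set ℝ).Infinite :=
      Set.infinite_of_injective_forall_mem hinj2 hmem
    exact hinf (Finset.finite_toSet _)
end

section
/- Let t be an orientation-preserving PL homeomorphism of ℝ/ℤ with at least one break point, all break points rational, mapping rationals to rationals, and derivatives powers of a fixed integer n ≥ 2. If m is the least common multiple of the denominators of the break points of t and of their images under t, then the partition of S¹ into the m equal intervals [p/m,(p+1)/m] is Markov for t; hence height(t) ≤ m. -/
open Filter Set

/-- The partition of the circle into `m` equal intervals `[j/m,(j+1)/m]` is Markov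
for `t` (stated on the lift): each interval is either stretched linearly over
`n^k` consecutive intervals, or belongs to a strip of `n^k` consecutive intervals
mapped linearly onto a single interval. -/
def IsMarkovFor (t : ℝ → ℝ) (n m : ℕ) : Prop :=
  ∀ j : ℤ, ∃ k : ℕ,
    (∃ l : ℤ, ∀ x ∈ Icc ((j : ℝ) / m) (((j : ℝ) + 1) / m),
        t x = (l : ℝ) / m + (n : ℝ) ^ k * (x - (j : ℝ) / m)) ∨
    (∃ i l : ℤ, i ≤ j ∧ (j : ℝ) < (i : ℝ) + (n : ℝ) ^ k ∧
      ∀ x ∈ Icc ((i : ℝ) / m) (((i : ℝ) + (n : ℝ) ^ k) / m),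
        t x = (l : ℝ) / m + (x - (i : ℝ) / m) / (n : ℝ) ^ k)

lemma rat_den_dvd_int {q : ℚ} {m : ℕ} (h : q.den ∣ m) : ∃ B : ℤ, (q : ℝ) * m = B := by
  obtain ⟨d, hd⟩ := h
  refine ⟨q.num * d, ?_⟩
  have h1 : (q * m : ℚ) = ((q.num * d : ℤ) : ℚ) := by
    rw [hd]
    push_cast
    rw [← mul_assoc]
    congr 1
    rw [mul_comm]
    exact_mod_cast Rat.den_mul_eq_num q
  exact_mod_cast congrArg (fun r : ℚ => (r : ℝ)) h1

lemma circle_lift_int_shift {t : ℝ → ℝ} (ht : ∀ x : ℝ, t (x + 1) = t x + 1) :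
    ∀ (q : ℤ) (x : ℝ), t (x + q) = t x + q := by
  intro q
  induction q using Int.induction_on with
  | zero => simp
  | succ k ih =>
      intro x
      have h1 : x + (((k : ℤ) + 1 : ℤ) : ℝ) = (x + ((k : ℤ) : ℝ)) + 1 := by push_cast; ring
      rw [h1, ht, ih]; push_cast; ring
  | pred k ih =>
      intro x
      have h1 : x + ((-(k : ℤ) - 1 : ℤ) : ℝ) + 1 = x + ((-(k : ℤ) : ℤ) : ℝ) := by
        push_cast; ring
      have h2 := ht (x + ((-(k : ℤ) - 1 : ℤ) : ℝ))
      rw [h1, ih] at h2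
      push_cast at h2 ⊢
      linarith

/-- if `t` has at least one break point and `m` is the lcm of the
denominators of the break points and of their images, then the partition into `m`
equal intervals is Markov for `t`; hence `height(t) ≤ m`. -/
theorem markov_partition_of_lcm_denominators (n : ℕ) (hn : 2 ≤ n)
    (t : ℝ → ℝ) (ht : IsCircleLift t)
    (hrat : ∀ q : ℚ, ∃ q' : ℚ, t (q : ℝ) = (q' : ℝ))
    (K : ℕ) (hK : 1 ≤ K) (b : Fin (K + 1) → ℚ) (z : Fin K → ℤ)
    (hPL : IsPLWithData t n K b z)
    (c : Fin (K + 1) → ℚ) (hc : ∀ i, t ((b i : ℚ) : ℝ) = ((c i : ℚ) : ℝ))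
    (m : ℕ)
    (hm : m = Finset.univ.lcm (fun i : Fin (K + 1) => Nat.lcm (b i).den (c i).den)) :
    IsMarkovFor t n m ∧ sInf {m' : ℕ | 0 < m' ∧ IsMarkovFor t n m'} ≤ m := by
  obtain ⟨hb0, hbK, hbmono, hlin⟩ := hPL
  have hnR : (0 : ℝ) < (n : ℝ) := by positivity
  -- m is positive
  have hm0 : 0 < m := by
    rcases Nat.eq_zero_or_pos m with h | h
    · exfalso
      rw [h] at hm
      have h0 := hm.symm
      rw [Finset.lcm_eq_zero_iff] at h0
      obtain ⟨i, -, hi⟩ := h0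
      exact Nat.lcm_ne_zero (b i).den_nz (c i).den_nz hi
    · exact h
  have hmR : (0 : ℝ) < (m : ℝ) := by exact_mod_cast hm0
  have hmne : (m : ℝ) ≠ 0 := hmR.ne'
  -- denominators divide m
  have hbden : ∀ i : Fin (K + 1), (b i).den ∣ m := fun i => by
    rw [hm]
    exact dvd_trans (Nat.dvd_lcm_left _ _) (Finset.dvd_lcm (Finset.mem_univ i))
  have hcden : ∀ i : Fin (K + 1), (c i).den ∣ m := fun i => by
    rw [hm]
    exact dvd_trans (Nat.dvd_lcm_right _ _) (Finset.dvd_lcm (Finset.mem_univ i))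
  -- integer coordinates of break points and images
  choose B hB using fun i : Fin (K + 1) => rat_den_dvd_int (hbden i)
  choose C hC using fun i : Fin (K + 1) => rat_den_dvd_int (hcden i)
  have hBr : ∀ i, ((b i : ℚ) : ℝ) = (B i : ℝ) / m := by
    intro i; field_simp [← hB i]; exact hB i
  have hCr : ∀ i, ((c i : ℚ) : ℝ) = (C i : ℝ) / m := by
    intro i; field_simp [← hC i]; exact hC i
  have hB0 : B 0 = 0 := by
    have h1 : ((B 0 : ℤ) : ℝ) = 0 := by
      rw [← hB 0, hb0]; push_cast; ring
    exact_mod_cast h1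
  have hBK : B (Fin.last K) = (m : ℤ) := by
    have h1 : ((B (Fin.last K) : ℤ) : ℝ) = (m : ℝ) := by
      rw [← hB (Fin.last K), hbK]; push_cast; ring
    exact_mod_cast h1
  have hBmono : StrictMono B := by
    intro i i' hii
    have h1 : ((b i : ℚ) : ℝ) < ((b i' : ℚ) : ℝ) := by exact_mod_cast hbmono hii
    rw [hBr, hBr, div_lt_div_iff_of_pos_right hmR] at h1
    exact_mod_cast h1
  -- linearity on pieces, expressed with the integer data
  have hlin' : ∀ i : Fin K, ∀ x ∈ Icc ((B i.castSucc : ℝ) / m) ((B i.succ : ℝ) / m),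
      t x = (C i.castSucc : ℝ) / m + (n : ℝ) ^ (z i) * (x - (B i.castSucc : ℝ) / m) := by
    intro i x hx
    have hx' : x ∈ Icc ((b i.castSucc : ℝ)) ((b i.succ : ℝ)) := by
      rwa [hBr, hBr]
    rw [hlin i x hx', hc, hCr, hBr]
  -- relation between B increments and C increments
  have hrel : ∀ i : Fin K,
      (C i.succ : ℝ) = (C i.castSucc : ℝ) +
        (n : ℝ) ^ (z i) * ((B i.succ : ℝ) - (B i.castSucc : ℝ)) := by
    intro i
    have hle : (B i.castSucc : ℝ) / m ≤ (B i.succ : ℝ) / m := by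
      have h1 : (B i.castSucc : ℝ) ≤ (B i.succ : ℝ) := by
        exact_mod_cast (hBmono (Fin.castSucc_lt_succ (i := i))).le
      gcongr
    have h2 := hlin' i ((B i.succ : ℝ) / m) ⟨hle, le_refl _⟩
    have h3 : t ((B i.succ : ℝ) / m) = (C i.succ : ℝ) / m := by
      rw [← hBr, hc, hCr]
    rw [h3] at h2
    have h4 : (C i.succ : ℝ) / m * m = ((C i.castSucc : ℝ) / m +
        (n : ℝ) ^ (z i) * ((B i.succ : ℝ) / m - (B i.castSucc : ℝ) / m)) * m := by
      rw [h2]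
    field_simp at h4
    linarith [h4]
  -- the core case: 0 ≤ j < m
  have hcore : ∀ j : ℤ, 0 ≤ j → j < (m : ℤ) → ∃ k : ℕ,
      (∃ l : ℤ, ∀ x ∈ Icc ((j : ℝ) / m) (((j : ℝ) + 1) / m),
          t x = (l : ℝ) / m + (n : ℝ) ^ k * (x - (j : ℝ) / m)) ∨
      (∃ i l : ℤ, i ≤ j ∧ (j : ℝ) < (i : ℝ) + (n : ℝ) ^ k ∧
        ∀ x ∈ Icc ((i : ℝ) / m) (((i : ℝ) + (n : ℝ) ^ k) / m),
          t x = (l : ℝ) / m + (x - (i : ℝ) / m) / (n : ℝ) ^ k) := by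
    intro j hj0 hjm
    -- find the piece containing [j/m, (j+1)/m]
    set F : Finset (Fin (K + 1)) := Finset.univ.filter (fun i => B i ≤ j) with hF
    have hFne : F.Nonempty := ⟨0, by simp [hF, hB0, hj0]⟩
    set i0 := F.max' hFne with hi0def
    have hi0 : B i0 ≤ j := (Finset.mem_filter.mp (F.max'_mem hFne)).2
    have hi0ne : i0 ≠ Fin.last K := by
      intro h
      rw [h, hBK] at hi0
      omega
    set idx : Fin K := i0.castPred hi0ne with hidxdef
    have hcs : idx.castSucc = i0 := Fin.castSucc_castPred i0 hi0ne
    have hBcj : B idx.castSucc ≤ j := by rw [hcs]; exact hi0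
    have hjBs : j < B idx.succ := by
      by_contra h
      push_neg at h
      have hmem : idx.succ ∈ F := Finset.mem_filter.mpr ⟨Finset.mem_univ _, h⟩
      have hle := F.le_max' _ hmem
      rw [← hi0def, ← hcs] at hle
      exact absurd hle (not_le.mpr (Fin.castSucc_lt_succ (i := idx)))
    rcases le_or_gt 0 (z idx) with hz | hz
    · -- expanding (or unit slope) case
      refine ⟨(z idx).toNat, Or.inl ⟨C idx.castSucc + n ^ (z idx).toNat * (j - B idx.castSucc), ?_⟩⟩
      intro x hx
      have hzz : (n : ℝ) ^ (z idx) = (n : ℝ) ^ (z idx).toNat := by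
        rw [← zpow_natCast, Int.toNat_of_nonneg hz]
      have hx' : x ∈ Icc ((B idx.castSucc : ℝ) / m) ((B idx.succ : ℝ) / m) := by
        constructor
        · refine le_trans ?_ hx.1
          have : (B idx.castSucc : ℝ) ≤ (j : ℝ) := by exact_mod_cast hBcj
          gcongr
        · refine le_trans hx.2 ?_
          have : ((j : ℝ) + 1) ≤ (B idx.succ : ℝ) := by exact_mod_cast hjBs
          gcongr
      rw [hlin' idx x hx', hzz]
      push_cast
      field_simp
      ring
    · -- contracting case
      set k : ℕ := (-(z idx)).toNat with hkdef
      have hzz : (n : ℝ) ^ (z idx) = ((n : ℝ) ^ k)⁻¹ := by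
        rw [← zpow_natCast, hkdef, Int.toNat_of_nonneg (by omega), zpow_neg, inv_inv]
      have hnk : (0 : ℝ) < (n : ℝ) ^ k := by positivity
      have hnkne : (n : ℝ) ^ k ≠ 0 := hnk.ne'
      have hnkZ : (0 : ℤ) < (n : ℤ) ^ k := by positivity
      -- length of piece is n^k times length of image
      have hD : B idx.succ - B idx.castSucc = (n : ℤ) ^ k * (C idx.succ - C idx.castSucc) := by
        have h1 := hrel idx
        rw [hzz] at h1
        have h2 : ((B idx.succ - B idx.castSucc : ℤ) : ℝ) =
            (((n : ℤ) ^ k * (C idx.succ - C idx.castSucc) : ℤ) : ℝ) := by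
          push_cast
          field_simp at h1 ⊢
          linarith [h1]
        exact_mod_cast h2
      have hDpos : 0 < C idx.succ - C idx.castSucc := by
        have h1 : 0 < B idx.succ - B idx.castSucc := by
          have := hBmono (Fin.castSucc_lt_succ (i := idx))
          omega
        by_contra hcon
        push_neg at hcon
        have h2 : (n : ℤ) ^ k * (C idx.succ - C idx.castSucc) ≤ 0 :=
          mul_nonpos_of_nonneg_of_nonpos (by positivity) hcon
        omega
      set s : ℤ := (j - B idx.castSucc) / (n : ℤ) ^ k with hsdef
      set r : ℤ := (j - B idx.castSucc) % (n : ℤ) ^ k with hrdef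
      have hdm : (n : ℤ) ^ k * s + r = j - B idx.castSucc := Int.mul_ediv_add_emod _ _
      have hr0 : 0 ≤ r := Int.emod_nonneg _ (by positivity)
      have hrlt : r < (n : ℤ) ^ k := Int.emod_lt_of_pos _ hnkZ
      have hs0 : 0 ≤ s := Int.ediv_nonneg (by omega) (by positivity)
      have hslt : s + 1 ≤ C idx.succ - C idx.castSucc := by
        by_contra h
        push_neg at h
        have h1 : C idx.succ - C idx.castSucc ≤ s := by omega
        have h2 : (n : ℤ) ^ k * (C idx.succ - C idx.castSucc) ≤ (n : ℤ) ^ k * s :=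
          mul_le_mul_of_nonneg_left h1 hnkZ.le
        omega
      have hsz : B idx.castSucc ≤ B idx.castSucc + (n : ℤ) ^ k * s := by
        linarith [mul_nonneg hnkZ.le hs0]
      have h3 : B idx.castSucc + (n : ℤ) ^ k * s + (n : ℤ) ^ k ≤ B idx.succ := by
        have h4 : (n : ℤ) ^ k * (s + 1) ≤ (n : ℤ) ^ k * (C idx.succ - C idx.castSucc) :=
          mul_le_mul_of_nonneg_left hslt hnkZ.le
        have h4' : (n : ℤ) ^ k * s + (n : ℤ) ^ k ≤ (n : ℤ) ^ k * (C idx.succ - C idx.castSucc) := by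
          ring_nf at h4 ⊢
          linarith [h4]
        linarith [h4', hD]
      refine ⟨k, Or.inr ⟨B idx.castSucc + (n : ℤ) ^ k * s, C idx.castSucc + s, ?_, ?_, ?_⟩⟩
      · linarith [hdm, hr0]
      · have h1 : j < B idx.castSucc + (n : ℤ) ^ k * s + (n : ℤ) ^ k := by
          linarith [hdm, hrlt]
        have h1' : (j : ℝ) < ((B idx.castSucc + (n : ℤ) ^ k * s + (n : ℤ) ^ k : ℤ) : ℝ) := by
          exact_mod_cast h1
        push_cast at h1' ⊢
        linarith
      · intro x hx
        have hsub1 : (B idx.castSucc : ℝ) ≤ ((B idx.castSucc + (n : ℤ) ^ k * s : ℤ) : ℝ) := by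
          exact_mod_cast hsz
        have hsub2 : ((B idx.castSucc + (n : ℤ) ^ k * s : ℤ) : ℝ) + (n : ℝ) ^ k
            ≤ (B idx.succ : ℝ) := by
          have h5 : ((B idx.castSucc + (n : ℤ) ^ k * s + (n : ℤ) ^ k : ℤ) : ℝ)
              ≤ ((B idx.succ : ℤ) : ℝ) := by exact_mod_cast h3
          push_cast at h5 ⊢
          linarith
        have hx' : x ∈ Icc ((B idx.castSucc : ℝ) / m) ((B idx.succ : ℝ) / m) := by
          refine ⟨le_trans ?_ hx.1, le_trans hx.2 ?_⟩
          · gcongr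
          · gcongr
        rw [hlin' idx x hx', hzz]
        push_cast
        field_simp
        ring
  -- assemble: extend to all j by integer translation
  have hmarkov : IsMarkovFor t n m := by
    intro j
    set q : ℤ := j / (m : ℤ) with hqdef
    set j₀ : ℤ := j % (m : ℤ) with hj0def
    have hmz : ((m : ℤ)) ≠ 0 := by exact_mod_cast hm0.ne'
    have hj₀0 : 0 ≤ j₀ := Int.emod_nonneg _ hmz
    have hj₀m : j₀ < (m : ℤ) := Int.emod_lt_of_pos _ (by exact_mod_cast hm0)
    have hjeq : j = (m : ℤ) * q + j₀ := by
      rw [hqdef, hj0def]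
      exact (Int.mul_ediv_add_emod j m).symm
    have hjR : (j : ℝ) = (m : ℝ) * (q : ℝ) + (j₀ : ℝ) := by exact_mod_cast hjeq
    have hshift := circle_lift_int_shift ht.2.2.2
    obtain ⟨k, hcase⟩ := hcore j₀ hj₀0 hj₀m
    refine ⟨k, ?_⟩
    rcases hcase with ⟨l, hl⟩ | ⟨i, l, hij, hjik, hl⟩
    · left
      refine ⟨l + m * q, fun x hx => ?_⟩
      have hdiv : (j : ℝ) / m = (j₀ : ℝ) / m + (q : ℝ) := by
        rw [hjR]; field_simp; ring
      have hy : x - (q : ℝ) ∈ Icc ((j₀ : ℝ) / m) (((j₀ : ℝ) + 1) / m) := by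
        have hdiv2 : ((j : ℝ) + 1) / m = ((j₀ : ℝ) + 1) / m + (q : ℝ) := by
          rw [hjR]; field_simp; ring
        constructor
        · have h1 := hx.1
          rw [hdiv] at h1
          linarith
        · have h1 := hx.2
          rw [hdiv2] at h1
          linarith
      have h1 := hl _ hy
      have h2 : t x = t (x - (q : ℝ)) + (q : ℝ) := by
        have := hshift q (x - (q : ℝ))
        rw [sub_add_cancel] at this
        rw [this]
      rw [h2, h1, hjR]
      push_cast
      field_simp
      ring
    · right
      refine ⟨i + m * q, l + m * q, by omega, ?_, fun x hx => ?_⟩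
      · push_cast
        push_cast at hjik
        rw [hjR]
        push_cast
        linarith
      · have hy : x - (q : ℝ) ∈ Icc ((i : ℝ) / m) (((i : ℝ) + (n : ℝ) ^ k) / m) := by
          have hx1 := hx.1
          have hx2 := hx.2
          have hd1 : ((i + (m : ℤ) * q : ℤ) : ℝ) / m = (i : ℝ) / m + (q : ℝ) := by
            push_cast; field_simp
          have hd2 : (((i + (m : ℤ) * q : ℤ) : ℝ) + (n : ℝ) ^ k) / m
              = ((i : ℝ) + (n : ℝ) ^ k) / m + (q : ℝ) := by
            push_cast; field_simp; ring
          rw [hd1] at hx1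
          rw [hd2] at hx2
          exact ⟨by linarith, by linarith⟩
        have h1 := hl _ hy
        have h2 : t x = t (x - (q : ℝ)) + (q : ℝ) := by
          have := hshift q (x - (q : ℝ))
          rw [sub_add_cancel] at this
          rw [this]
        rw [h2, h1]
        push_cast
        field_simp
        ring
  exact ⟨hmarkov, Nat.sInf_le ⟨hm0, hmarkov⟩⟩
end
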